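/- Let k ≥ 2 be a fixed integer. For each n > k, let (x^{(n)}_m)_{m≥0} be the k-averaging process on ℝ^n started from the initial vector x_0 = (1, 0, …, 0), and set T_n(m) = ∑_{i=1}^n |x^{(n)}_{m,i} − 1/n|. Then for any fixed real number θ with θ > 1/(k−1), the random variables T_n(⌊θ n log n⌋) converge to 0 in probability as n → ∞. -/

import Mathlib

open MeasureTheory ProbabilityTheory Filter

noncomputable section

instance (α : Type*) : MeasurableSpace (Finset α) := ⊤

/-- One averaging step: replace all coordinates in `A` by their average. -/
def avgStep {n : ℕ} (k : ℕ) (A : Finset (Fin n)) (x : Fin n → ℝ) : Fin n → ℝ :=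
  fun i => if i ∈ A then (∑ j ∈ A, x j) / k else x i

/-- The `k`-averaging process driven by the sequence of chosen subsets `A · ω`. -/
def proc {Ω : Type*} {n : ℕ} (k : ℕ) (x0 : Fin n → ℝ) (A : ℕ → Ω → Finset (Fin n))
    (ω : Ω) : ℕ → Fin n → ℝ
  | 0 => x0
  | m + 1 => avgStep k (A m ω) (proc k x0 A ω m)

/-!
Let `P` be the one-step operator `P f (y) = E f (avgStep k A y)` of the chain, `A` a uniform
`k`-subset. Since `x_m` is a function of the first `m` chosen subsets, independence bounds the
probability of any event `{x_m ∈ B}` by `(P^m 𝟙_B)(x_0)`, a weighted sum over subset sequences.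
A second-moment computation over uniform `k`-subsets shows that `V y = ∑ (y_i - ȳ)^2` is an
eigenfunction of `P` with eigenvalue `c = 1 - (k-1)/(n-1)`, while functions of `∑ y` are fixed
by `P`. As `∑ (y_i - 1/n)^2 = V y + (∑ y - 1)^2 / n`, Cauchy–Schwarz and Chebyshev give
`P(T(m) ≥ ε) ≤ n c^m V(x_0) / ε^2 ≤ e n^{1 - θ(k-1)} / ε^2` at `m = ⌊θ n log n⌋`.
-/

open Finset

section KSubsets

variable {α : Type*} [Fintype α] [DecidableEq α] {k : ℕ}

theorem card_powersetCard_univ_filter_subset {u : Finset α} (hu : #u ≤ k) :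
    #{s ∈ powersetCard k univ | u ⊆ s} = (Fintype.card α - #u).choose (k - #u) := by
  rw [card_filter_powersetCard_subset _ _ _ (subset_univ u) hu, card_univ]

theorem sum_powersetCard_sum (hk : 1 ≤ k) (f : α → ℝ) :
    ∑ s ∈ powersetCard k univ, ∑ i ∈ s, f i
      = (Fintype.card α - 1).choose (k - 1) * ∑ i, f i := by
  have hcount (i : α) :
      #{s ∈ powersetCard k univ | i ∈ s} = (Fintype.card α - 1).choose (k - 1) := by
    simpa using card_powersetCard_univ_filter_subset (u := {i}) (by simpa using hk)
  rw [sum_congr rfl fun s _ => (sum_ite_mem_eq s f).symm, sum_comm, mul_sum]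
  refine sum_congr rfl fun i _ => ?_
  rw [← sum_filter, sum_const, hcount, nsmul_eq_mul]

theorem sum_powersetCard_sum_sq (hk : 2 ≤ k) (f : α → ℝ) :
    ∑ s ∈ powersetCard k univ, (∑ i ∈ s, f i) ^ 2
      = (Fintype.card α - 2).choose (k - 2) * (∑ i, f i) ^ 2
        + ((Fintype.card α - 1).choose (k - 1) - (Fintype.card α - 2).choose (k - 2))
          * ∑ i, f i ^ 2 := by
  set b : ℝ := (((Fintype.card α - 1).choose (k - 1) : ℕ) : ℝ)
  set d : ℝ := (((Fintype.card α - 2).choose (k - 2) : ℕ) : ℝ)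
  have hcount (i j : α) : (#{s ∈ powersetCard k univ | i ∈ s ∧ j ∈ s} : ℝ)
      = d + if i = j then b - d else 0 := by
    have := card_powersetCard_univ_filter_subset (u := {i, j}) (card_le_two.trans hk)
    simp only [insert_subset_iff, singleton_subset_iff] at this
    rw [this]
    split_ifs with h <;> simp [h, b, d]
  have hsq (s : Finset α) : (∑ i ∈ s, f i) ^ 2
      = ∑ i, ∑ j, if i ∈ s ∧ j ∈ s then f i * f j else 0 := by
    rw [sq, sum_mul_sum, ← sum_ite_mem_eq]
    refine sum_congr rfl fun i _ => ?_
    rw [← sum_ite_mem_eq]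
    split_ifs <;> simp_all
  have hpair (i j : α) : ∑ s ∈ powersetCard k univ, (if i ∈ s ∧ j ∈ s then f i * f j else 0)
      = (d + if i = j then b - d else 0) * (f i * f j) := by
    rw [← sum_filter, sum_const, nsmul_eq_mul, hcount]
  rw [sum_congr rfl fun s _ => hsq s, sum_comm, sum_congr rfl fun i _ => sum_comm]
  simp only [hpair, add_mul, ite_mul, zero_mul, sum_add_distrib, sum_ite_eq, mem_univ, if_true]
  rw [sq, sum_mul_sum, mul_sum, mul_sum]
  simp only [mul_sum, ← mul_assoc, ← sq]

end KSubsets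

section RandomPaths

variable {X β : Type*}

def iterPath (g : β → X → X) (x : X) : (m : ℕ) → (Fin m → β) → X
  | 0, _ => x
  | m + 1, t => g (t (Fin.last m)) (iterPath g x m (Fin.init t))

theorem iterPath_snoc (g : β → X → X) (x : X) {m : ℕ} (t : Fin m → β) (b : β) :
    iterPath g x (m + 1) (Fin.snoc t b) = g b (iterPath g x m t) := by
  simp [iterPath, Fin.init_snoc]

variable [Fintype β]

def markovOp (q : β → ℝ) (g : β → X → X) : Module.End ℝ (X → ℝ) :=
  ∑ b, q b • LinearMap.funLeft ℝ ℝ (g b)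

theorem markovOp_apply (q : β → ℝ) (g : β → X → X) (f : X → ℝ) (x : X) :
    markovOp q g f x = ∑ b, q b * f (g b x) := by
  simp [markovOp, LinearMap.funLeft_apply]

theorem markovOp_pow_apply (q : β → ℝ) (g : β → X → X) (f : X → ℝ) (x : X) (m : ℕ) :
    (markovOp q g ^ m) f x = ∑ t : Fin m → β, (∏ i, q (t i)) * f (iterPath g x m t) := by
  induction m generalizing f with
  | zero => simp [iterPath]
  | succ m ih =>
    rw [pow_succ, Module.End.mul_apply, ih, ← (Fin.snocEquiv fun _ => β).sum_comp,
      Fintype.sum_prod_type, sum_comm]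
    refine sum_congr rfl fun t _ => ?_
    rw [markovOp_apply, mul_sum]
    refine sum_congr rfl fun b _ => ?_
    change _ = (∏ i, q (Fin.snoc (α := fun _ => β) t b i)) *
      f (iterPath g x (m + 1) (Fin.snoc (α := fun _ => β) t b))
    simp only [Fin.prod_univ_castSucc, Fin.snoc_castSucc, Fin.snoc_last, iterPath_snoc]
    ring

theorem markovOp_pow_mono {q : β → ℝ} (hq : 0 ≤ q) (g : β → X → X) {f h : X → ℝ}
    (hfh : f ≤ h) (m : ℕ) : (markovOp q g ^ m) f ≤ (markovOp q g ^ m) h := by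
  intro x
  rw [markovOp_pow_apply, markovOp_pow_apply]
  gcongr with t
  · exact prod_nonneg fun i _ => hq _
  · exact hfh _

theorem measure_iterPath_mem_le [MeasurableSpace β] [MeasurableSingletonClass β]
    {Ω : Type*} [MeasurableSpace Ω] {μ : Measure Ω} {A : ℕ → Ω → β} (hA : iIndepFun A μ)
    {q : β → ℝ} (hq0 : 0 ≤ q) (hq : ∀ i b, μ (A i ⁻¹' {b}) = ENNReal.ofReal (q b))
    (g : β → X → X) (x : X) (m : ℕ) (B : Set X) :
    μ {ω | iterPath g x m (fun i => A i ω) ∈ B}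
      ≤ ENNReal.ofReal ((markovOp q g ^ m) (B.indicator 1) x) := by
  classical
  let F : Finset (Fin m → β) := {t | iterPath g x m t ∈ B}
  have hcylinder (t : Fin m → β) :
      μ (⋂ i : Fin m, A i ⁻¹' {t i}) = ENNReal.ofReal (∏ i, q (t i)) := by
    have := (hA.precomp Fin.val_injective).measure_inter_preimage_eq_mul univ
      (sets := fun i => {t i}) fun i _ => measurableSet_singleton _
    simp only [mem_univ, Set.iInter_true] at this
    simp [this, hq, ENNReal.ofReal_prod_of_nonneg fun i _ => hq0 (t i)]
  calc μ {ω | iterPath g x m (fun i => A i ω) ∈ B}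
      ≤ μ (⋃ t ∈ F, ⋂ i : Fin m, A i ⁻¹' {t i}) := measure_mono fun ω hω => by
        simp only [Set.mem_iUnion, Set.mem_iInter]
        exact ⟨_, by simpa [F] using hω, fun i => rfl⟩
    _ ≤ ∑ t ∈ F, μ (⋂ i : Fin m, A i ⁻¹' {t i}) := measure_biUnion_finset_le F _
    _ = ENNReal.ofReal (∑ t ∈ F, ∏ i, q (t i)) := by
        rw [ENNReal.ofReal_sum_of_nonneg fun t _ => prod_nonneg fun i _ => hq0 (t i)]
        simp only [hcylinder]
    _ = ENNReal.ofReal ((markovOp q g ^ m) (B.indicator 1) x) := by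
        rw [markovOp_pow_apply, sum_filter]
        simp [Set.indicator_apply]

end RandomPaths

section AveragingStep

variable {n k : ℕ} {s : Finset (Fin n)}

theorem avgStep_apply_of_mem {i : Fin n} (hi : i ∈ s) (y : Fin n → ℝ) :
    avgStep k s y i = (∑ j ∈ s, y j) / k := if_pos hi

theorem avgStep_apply_of_notMem {i : Fin n} (hi : i ∉ s) (y : Fin n → ℝ) :
    avgStep k s y i = y i := if_neg hi

theorem sum_avgStep_comp (g : ℝ → ℝ) (hs : #s = k) (y : Fin n → ℝ) :
    ∑ i, g (avgStep k s y i) = k * g ((∑ j ∈ s, y j) / k) + ∑ i ∈ sᶜ, g (y i) := by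
  have hin : ∑ i ∈ s, g (avgStep k s y i) = ∑ _i ∈ s, g ((∑ j ∈ s, y j) / k) :=
    sum_congr rfl fun i hi => by rw [avgStep_apply_of_mem hi]
  have hout : ∑ i ∈ sᶜ, g (avgStep k s y i) = ∑ i ∈ sᶜ, g (y i) :=
    sum_congr rfl fun i hi => by rw [avgStep_apply_of_notMem (mem_compl.1 hi)]
  rw [← sum_add_sum_compl s, hin, hout, sum_const, hs, nsmul_eq_mul]

theorem sum_avgStep (hk : k ≠ 0) (hs : #s = k) (y : Fin n → ℝ) :
    ∑ i, avgStep k s y i = ∑ i, y i := by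
  have := sum_avgStep_comp id hs y
  simp only [id, mul_div_cancel₀ _ (Nat.cast_ne_zero.2 hk : (k : ℝ) ≠ 0)] at this
  rw [this, sum_add_sum_compl]

def sqDev (a : ℝ) (y : Fin n → ℝ) : ℝ := ∑ i, (y i - a) ^ 2

def sqDevMean (y : Fin n → ℝ) : ℝ := sqDev ((∑ i, y i) / n) y

theorem sqDev_avgStep (hk : k ≠ 0) (hs : #s = k) (a : ℝ) (y : Fin n → ℝ) :
    sqDev a (avgStep k s y)
      = sqDev a y - ∑ i ∈ s, (y i - a) ^ 2 + (∑ i ∈ s, (y i - a)) ^ 2 / k := by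
  have hk' : (k : ℝ) ≠ 0 := Nat.cast_ne_zero.2 hk
  rw [sqDev, sum_avgStep_comp (fun t => (t - a) ^ 2) hs, sqDev, ← sum_add_sum_compl s,
    sum_sub_distrib, sum_const, hs, nsmul_eq_mul]
  field_simp
  ring

theorem sqDev_eq_sqDevMean_add (hn : n ≠ 0) (a : ℝ) (y : Fin n → ℝ) :
    sqDev a y = sqDevMean y + ((∑ i, y i) - n * a) ^ 2 / n := by
  have hn' : (n : ℝ) ≠ 0 := Nat.cast_ne_zero.2 hn
  simp only [sqDevMean, sqDev, sub_sq, sum_add_distrib, sum_sub_distrib, ← sum_mul, ← mul_sum,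
    sum_const, card_univ, Fintype.card_fin, nsmul_eq_mul]
  field_simp
  ring

theorem sqDevMean_le_sqDev (hn : n ≠ 0) (a : ℝ) (y : Fin n → ℝ) : sqDevMean y ≤ sqDev a y := by
  rw [sqDev_eq_sqDevMean_add hn a y, le_add_iff_nonneg_right]
  positivity

theorem indicator_le_sqDev {ε : ℝ} (hε : 0 < ε) (a : ℝ) :
    {y : Fin n → ℝ | ε ≤ ∑ i, |y i - a|}.indicator 1 ≤ (n / ε ^ 2) • sqDev a := by
  intro y
  by_cases hy : ε ≤ ∑ i, |y i - a|
  · rw [Set.indicator_of_mem (s := {y : Fin n → ℝ | ε ≤ ∑ i, |y i - a|}) hy, Pi.one_apply,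
      Pi.smul_apply, smul_eq_mul, div_mul_eq_mul_div, one_le_div (by positivity)]
    calc ε ^ 2 ≤ (∑ i, |y i - a|) ^ 2 := pow_le_pow_left₀ hε.le hy 2
      _ ≤ n * sqDev a y := by
        simpa [sqDev] using sq_sum_le_card_mul_sum_sq (s := univ) (f := fun i => |y i - a|)
  · rw [Set.indicator_of_notMem (s := {y : Fin n → ℝ | ε ≤ ∑ i, |y i - a|}) hy]
    simp only [Pi.smul_apply, smul_eq_mul, sqDev]
    positivity

end AveragingStep

section KAveraging

variable {n k : ℕ}

def kSubsetWeight (n k : ℕ) (s : Finset (Fin n)) : ℝ :=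
  if #s = k then ((n.choose k : ℕ) : ℝ)⁻¹ else 0

theorem kSubsetWeight_nonneg : 0 ≤ kSubsetWeight n k := fun s => by
  unfold kSubsetWeight; split_ifs <;> positivity

theorem ofReal_kSubsetWeight (hkn : k ≤ n) (s : Finset (Fin n)) :
    ENNReal.ofReal (kSubsetWeight n k s)
      = if #s = k then ((n.choose k : ℕ) : ENNReal)⁻¹ else 0 := by
  unfold kSubsetWeight
  split_ifs
  · rw [ENNReal.ofReal_inv_of_pos (by exact_mod_cast Nat.choose_pos hkn), ENNReal.ofReal_natCast]
  · exact ENNReal.ofReal_zero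

theorem sum_kSubsetWeight_mul (f : Finset (Fin n) → ℝ) :
    ∑ s, kSubsetWeight n k s * f s = (∑ s ∈ powersetCard k univ, f s) / n.choose k := by
  simp only [kSubsetWeight, ite_mul, zero_mul, ← sum_filter, powersetCard_eq_filter,
    powerset_univ, inv_mul_eq_div, sum_div]

abbrev averagingOp (n k : ℕ) : Module.End ℝ ((Fin n → ℝ) → ℝ) :=
  markovOp (kSubsetWeight n k) (avgStep k)

theorem averagingOp_apply (f : (Fin n → ℝ) → ℝ) (y : Fin n → ℝ) :
    averagingOp n k f y = (∑ s ∈ powersetCard k univ, f (avgStep k s y)) / n.choose k := by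
  rw [markovOp_apply, sum_kSubsetWeight_mul]

theorem averagingOp_comp_sum (hk : k ≠ 0) (hkn : k ≤ n) (h : ℝ → ℝ) :
    averagingOp n k (fun y => h (∑ i, y i)) = fun y => h (∑ i, y i) := by
  funext y
  have hC : ((n.choose k : ℕ) : ℝ) ≠ 0 := by exact_mod_cast (Nat.choose_pos hkn).ne'
  rw [averagingOp_apply,
    sum_congr rfl fun s hs => by rw [sum_avgStep hk (mem_powersetCard.1 hs).2], sum_const,
    card_powersetCard, card_univ, Fintype.card_fin, nsmul_eq_mul, mul_div_cancel_left₀ _ hC]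

theorem sum_powersetCard_sqDevMean_avgStep (hk : 2 ≤ k) (hkn : k ≤ n) (y : Fin n → ℝ) :
    ∑ s ∈ powersetCard k univ, sqDevMean (avgStep k s y)
      = (n.choose k - (n - 1).choose (k - 1)
          + ((n - 1).choose (k - 1) - (n - 2).choose (k - 2)) / k) * sqDevMean y := by
  set a := (∑ i, y i) / n
  have hcentred : ∑ i, (y i - a) = 0 := by
    rw [sum_sub_distrib, sum_const, card_univ, Fintype.card_fin, nsmul_eq_mul,
      mul_div_cancel₀ _ (by exact_mod_cast (by omega : n ≠ 0)), sub_self]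
  have hstep (s) (hs : s ∈ powersetCard k univ) : sqDevMean (avgStep k s y)
      = sqDev a y - ∑ i ∈ s, (y i - a) ^ 2 + (∑ i ∈ s, (y i - a)) ^ 2 / k := by
    rw [sqDevMean, sum_avgStep (by omega) (mem_powersetCard.1 hs).2,
      sqDev_avgStep (by omega) (mem_powersetCard.1 hs).2]
  rw [sum_congr rfl hstep, sum_add_distrib, sum_sub_distrib, ← sum_div,
    sum_powersetCard_sum (by omega), sum_powersetCard_sum_sq hk, hcentred, sum_const,
    card_powersetCard, card_univ]
  simp only [Fintype.card_fin, nsmul_eq_mul, sqDevMean, sqDev]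
  ring

/-- The coefficient simplifies because `C(n-1,k-1) / C(n,k) = k / n` and
`C(n-2,k-2) / C(n,k) = k (k-1) / (n (n-1))`. -/
theorem averagingOp_sqDevMean (hk : 2 ≤ k) (hkn : k ≤ n) :
    averagingOp n k sqDevMean = (1 - ((k : ℝ) - 1) / ((n : ℝ) - 1)) • sqDevMean := by
  funext y
  rw [averagingOp_apply, sum_powersetCard_sqDevMean_avgStep hk hkn, Pi.smul_apply, smul_eq_mul]
  obtain ⟨k, rfl⟩ := Nat.exists_eq_add_of_le' hk
  obtain ⟨n, rfl⟩ := Nat.exists_eq_add_of_le' (hk.trans hkn)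
  have h₁ : ((n : ℝ) + 2) * (n + 1).choose (k + 1) = (n + 2).choose (k + 2) * ((k : ℝ) + 2) := by
    exact_mod_cast Nat.add_one_mul_choose_eq (n + 1) (k + 1)
  have h₂ : ((n : ℝ) + 1) * n.choose k = (n + 1).choose (k + 1) * ((k : ℝ) + 1) := by
    exact_mod_cast Nat.add_one_mul_choose_eq n k
  have hC : ((n + 2).choose (k + 2) : ℝ) ≠ 0 := by exact_mod_cast (Nat.choose_pos hkn).ne'
  simp only [Nat.add_sub_cancel, show n + 2 - 1 = n + 1 by omega, show k + 2 - 1 = k + 1 by omega]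
  push_cast
  rw [show (n : ℝ) + 2 - 1 = n + 1 by ring, show (k : ℝ) + 2 - 1 = k + 1 by ring]
  field_simp
  linear_combination (-(sqDevMean y) * ((k : ℝ) + 1)) * h₁ - sqDevMean y * h₂

theorem averagingOp_pow_sqDev (hk : 2 ≤ k) (hkn : k ≤ n) (a : ℝ) (m : ℕ) :
    (averagingOp n k ^ m) (sqDev a)
      = (1 - ((k : ℝ) - 1) / ((n : ℝ) - 1)) ^ m • sqDevMean
        + fun y => ((∑ i, y i) - n * a) ^ 2 / n := by
  have hsplit : sqDev a = sqDevMean + fun y : Fin n → ℝ => ((∑ i, y i) - n * a) ^ 2 / n :=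
    funext (sqDev_eq_sqDevMean_add (by omega) a)
  have heigen (m : ℕ) : (averagingOp n k ^ m) sqDevMean
      = (1 - ((k : ℝ) - 1) / ((n : ℝ) - 1)) ^ m • sqDevMean := by
    induction m with
    | zero => simp
    | succ m ih =>
      rw [pow_succ', Module.End.mul_apply, ih, map_smul, averagingOp_sqDevMean hk hkn,
        smul_smul, ← pow_succ]
  rw [hsplit, map_add, heigen, Module.End.pow_apply,
    Function.iterate_fixed (averagingOp_comp_sum (by omega) hkn fun t => (t - n * a) ^ 2 / n)]

theorem proc_eq_iterPath {Ω : Type*} (x0 : Fin n → ℝ) (A : ℕ → Ω → Finset (Fin n)) (ω : Ω)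
    (m : ℕ) : proc k x0 A ω m = iterPath (avgStep k) x0 m (fun i => A i ω) := by
  induction m with
  | zero => rfl
  | succ m ih => rw [proc, ih]; rfl

instance (α : Type*) : DiscreteMeasurableSpace (Finset α) := ⟨fun _ => trivial⟩

theorem measure_le_sum_abs_proc_sub_mean_le (hk : 2 ≤ k) (hkn : k ≤ n) {Ω : Type*}
    [MeasurableSpace Ω] {μ : Measure Ω} {A : ℕ → Ω → Finset (Fin n)} (hindep : iIndepFun A μ)
    (hunif : ∀ (m : ℕ) (s : Finset (Fin n)),
      μ (A m ⁻¹' {s}) = if #s = k then ((n.choose k : ℕ) : ENNReal)⁻¹ else 0)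
    (x0 : Fin n → ℝ) (m : ℕ) {ε : ℝ} (hε : 0 < ε) :
    μ {ω | ε ≤ ∑ i, |proc k x0 A ω m i - (∑ j, x0 j) / n|}
      ≤ ENNReal.ofReal
          (n / ε ^ 2 * (1 - ((k : ℝ) - 1) / ((n : ℝ) - 1)) ^ m * sqDevMean x0) := by
  set a := (∑ j, x0 j) / n
  have hweight (m s) : μ (A m ⁻¹' {s}) = ENNReal.ofReal (kSubsetWeight n k s) := by
    rw [hunif, ofReal_kSubsetWeight hkn]
  have hmean : (∑ i, x0 i) - n * a = 0 := by
    rw [mul_div_cancel₀ _ (by exact_mod_cast (by omega : n ≠ 0)), sub_self]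
  simp only [proc_eq_iterPath]
  refine (measure_iterPath_mem_le hindep kSubsetWeight_nonneg hweight _ _ m
    {y : Fin n → ℝ | ε ≤ ∑ i, |y i - a|}).trans (ENNReal.ofReal_le_ofReal ?_)
  calc (averagingOp n k ^ m) ({y : Fin n → ℝ | ε ≤ ∑ i, |y i - a|}.indicator 1) x0
      ≤ (averagingOp n k ^ m) ((n / ε ^ 2) • sqDev a) x0 :=
        markovOp_pow_mono kSubsetWeight_nonneg _ (indicator_le_sqDev hε a) m x0
    _ = n / ε ^ 2 * (1 - ((k : ℝ) - 1) / ((n : ℝ) - 1)) ^ m * sqDevMean x0 := by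
        rw [map_smul, averagingOp_pow_sqDev hk hkn]
        simp [hmean, mul_assoc]

theorem sum_ite_val_eq_zero (hn : n ≠ 0) (c : ℝ) :
    ∑ i : Fin n, (if i.val = 0 then c else 0) = c := by
  rw [Fin.sum_univ_eq_sum_range (fun i => if i = 0 then c else 0), sum_ite_eq',
    if_pos (mem_range.2 (Nat.pos_of_ne_zero hn))]

theorem measure_le_sum_abs_proc_single_sub_le (hk : 2 ≤ k) (hkn : k < n) {Ω : Type*}
    [MeasurableSpace Ω] {μ : Measure Ω} {A : ℕ → Ω → Finset (Fin n)} (hindep : iIndepFun A μ)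
    (hunif : ∀ (m : ℕ) (s : Finset (Fin n)),
      μ (A m ⁻¹' {s}) = if #s = k then ((n.choose k : ℕ) : ENNReal)⁻¹ else 0)
    (m : ℕ) {ε : ℝ} (hε : 0 < ε) :
    μ {ω | ε ≤ ∑ i, |proc k (fun i : Fin n => if i.val = 0 then (1 : ℝ) else 0) A ω m i - 1 / n|}
      ≤ ENNReal.ofReal (n * (1 - ((k : ℝ) - 1) / ((n : ℝ) - 1)) ^ m / ε ^ 2) := by
  set x0 : Fin n → ℝ := fun i => if i.val = 0 then 1 else 0
  have hn : n ≠ 0 := by omega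
  have hsum : ∑ i, x0 i = 1 := sum_ite_val_eq_zero hn 1
  have hvar : sqDevMean x0 ≤ 1 := (sqDevMean_le_sqDev hn 0 x0).trans_eq <| by
    simpa [sqDev, x0, ite_pow] using sum_ite_val_eq_zero hn 1
  have hkn' : (k : ℝ) + 1 ≤ n := by exact_mod_cast hkn
  have hc : 0 ≤ 1 - ((k : ℝ) - 1) / ((n : ℝ) - 1) :=
    sub_nonneg.2 (div_le_one_of_le₀ (by linarith) (by linarith))
  have hbound := measure_le_sum_abs_proc_sub_mean_le hk hkn.le hindep hunif x0 m hε
  rw [hsum] at hbound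
  refine hbound.trans (ENNReal.ofReal_le_ofReal ?_)
  calc n / ε ^ 2 * (1 - ((k : ℝ) - 1) / ((n : ℝ) - 1)) ^ m * sqDevMean x0
      ≤ n / ε ^ 2 * (1 - ((k : ℝ) - 1) / ((n : ℝ) - 1)) ^ m * 1 :=
        mul_le_mul_of_nonneg_left hvar (mul_nonneg (by positivity) (pow_nonneg hc _))
    _ = n * (1 - ((k : ℝ) - 1) / ((n : ℝ) - 1)) ^ m / ε ^ 2 := by ring

end KAveraging

theorem one_sub_pow_floor_le_exp {r : ℝ} (hr0 : 0 ≤ r) (hr1 : r ≤ 1) (x : ℝ) :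
    (1 - r) ^ ⌊x⌋₊ ≤ Real.exp (1 - r * x) := by
  calc (1 - r) ^ ⌊x⌋₊ ≤ Real.exp (-r) ^ ⌊x⌋₊ :=
        pow_le_pow_left₀ (by linarith) (Real.one_sub_le_exp_neg r) _
    _ = Real.exp (-(r * ⌊x⌋₊)) := by rw [← Real.exp_nat_mul]; ring_nf
    _ ≤ Real.exp (1 - r * x) := Real.exp_le_exp.2 (by nlinarith [Nat.lt_floor_add_one x])

theorem natCast_mul_contraction_pow_le {n k : ℕ} (hk : 2 ≤ k) (hkn : k < n) {θ : ℝ}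
    (hθ : 0 ≤ θ) :
    n * (1 - ((k : ℝ) - 1) / ((n : ℝ) - 1)) ^ ⌊θ * n * Real.log n⌋₊
      ≤ Real.exp (1 + (1 - θ * ((k : ℝ) - 1)) * Real.log n) := by
  set r := ((k : ℝ) - 1) / ((n : ℝ) - 1)
  have hk' : (2 : ℝ) ≤ k := by exact_mod_cast hk
  have hkn' : (k : ℝ) + 1 ≤ n := by exact_mod_cast hkn
  have hr1 : r ≤ 1 := div_le_one_of_le₀ (by linarith) (by linarith)
  have hrn : (k : ℝ) - 1 ≤ r * n := by
    rw [div_mul_eq_mul_div, le_div_iff₀ (by linarith)]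
    nlinarith
  have hlog : 0 ≤ Real.log n := Real.log_nonneg (by linarith)
  calc n * (1 - r) ^ ⌊θ * n * Real.log n⌋₊ ≤ n * Real.exp (1 - r * (θ * n * Real.log n)) := by
        gcongr
        exact one_sub_pow_floor_le_exp (div_nonneg (by linarith) (by linarith)) hr1 _
    _ ≤ Real.exp (Real.log n) * Real.exp (1 - θ * ((k : ℝ) - 1) * Real.log n) := by
        rw [Real.exp_log (by linarith)]
        refine mul_le_mul_of_nonneg_left (Real.exp_le_exp.2 ?_) (by linarith)
        nlinarith [mul_le_mul_of_nonneg_left hrn (mul_nonneg hθ hlog)]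
    _ = Real.exp (1 + (1 - θ * ((k : ℝ) - 1)) * Real.log n) := by
        rw [← Real.exp_add]
        ring_nf

theorem tendsto_exp_one_add_mul_log_natCast {c : ℝ} (hc : c < 0) :
    Tendsto (fun n : ℕ => Real.exp (1 + c * Real.log n)) atTop (nhds 0) :=
  Real.tendsto_exp_atBot.comp <| tendsto_atBot_add_const_left _ 1 <|
    (Real.tendsto_log_atTop.comp tendsto_natCast_atTop_atTop).const_mul_atTop_of_neg hc

theorem averaging_L1_upper_cutoff_general
    (k : ℕ) (hk : 2 ≤ k)
    (Ω : ℕ → Type*) [∀ n, MeasurableSpace (Ω n)]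
    (μ : ∀ n, Measure (Ω n))
    (A : ∀ n, ℕ → Ω n → Finset (Fin n))
    (hindep : ∀ n, k < n → iIndepFun (A n) (μ n))
    (hunif : ∀ n, k < n → ∀ (m : ℕ) (s : Finset (Fin n)),
      μ n (A n m ⁻¹' {s}) = if s.card = k then ((n.choose k : ENNReal))⁻¹ else 0)
    (θ : ℝ) (hθ : 1 / ((k : ℝ) - 1) < θ) :
    ∀ ε > 0, Tendsto
      (fun n => μ n {ω |
        ε ≤ ∑ i, |proc k (fun i : Fin n => if i.val = 0 then (1 : ℝ) else 0) (A n) ω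
                (⌊θ * n * Real.log n⌋₊) i - 1 / n|})
      atTop (nhds 0) := by
  intro ε hε
  have hk1 : (0 : ℝ) < k - 1 := by linarith [(Nat.ofNat_le_cast.2 hk : (2 : ℝ) ≤ k)]
  have hθ0 : 0 ≤ θ := (one_div_pos.2 hk1).le.trans hθ.le
  have hexp : 1 - θ * ((k : ℝ) - 1) < 0 := by rw [div_lt_iff₀ hk1] at hθ; linarith
  have hupper := ENNReal.tendsto_ofReal
    ((tendsto_exp_one_add_mul_log_natCast hexp).div_const (ε ^ 2))
  rw [zero_div, ENNReal.ofReal_zero] at hupper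
  refine tendsto_of_tendsto_of_tendsto_of_le_of_le' tendsto_const_nhds hupper
    (Eventually.of_forall fun _ => zero_le) ?_
  filter_upwards [eventually_gt_atTop k] with n hkn
  refine (measure_le_sum_abs_proc_single_sub_le hk hkn (hindep n hkn) (hunif n hkn) _ hε).trans
    (ENNReal.ofReal_le_ofReal ?_)
  gcongr
  exact natCast_mul_contraction_pow_le hk hkn hθ0

/-- For `θ > 1/(k-1)`, the `L¹` distance `T_n(⌊θ n log n⌋)` of the `k`-averaging
process started from `(1,0,…,0)` converges to `0` in probability as `n → ∞`. -/
theorem averaging_L1_upper_cutoff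
    (k : ℕ) (hk : 2 ≤ k)
    (Ω : ℕ → Type*) [∀ n, MeasurableSpace (Ω n)]
    (μ : ∀ n, Measure (Ω n)) [∀ n, IsProbabilityMeasure (μ n)]
    (A : ∀ n, ℕ → Ω n → Finset (Fin n))
    (hmeas : ∀ n, k < n → ∀ m, Measurable (A n m))
    (hindep : ∀ n, k < n → iIndepFun (A n) (μ n))
    (hunif : ∀ n, k < n → ∀ (m : ℕ) (s : Finset (Fin n)),
      μ n (A n m ⁻¹' {s}) = if s.card = k then ((n.choose k : ENNReal))⁻¹ else 0)
    (θ : ℝ) (hθ : 1 / ((k : ℝ) - 1) < θ) :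
    ∀ ε > 0, Tendsto
      (fun n => μ n {ω |
        ε ≤ ∑ i, |proc k (fun i : Fin n => if i.val = 0 then (1 : ℝ) else 0) (A n) ω
                (⌊θ * n * Real.log n⌋₊) i - 1 / n|})
      atTop (nhds 0) :=
  averaging_L1_upper_cutoff_general k hk Ω μ A hindep hunif θ hθ

end
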